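/- Minimal odometer well-definedness: given instruction stacks, a configuration σ, and parameters u_0, f_0, the inductive procedure m(0) = u_0 and m(v) = min{ k ∈ ℤ : m^L restricted to k at site v equals m^R(v−1) − f_0 − Σ_{i=1}^{v−1}|σ(i)| } defines an extended odometer m that is pointwise minimal among all extended stable odometers in the class with value u_0 at site 0 and net flow f_0 from 0 to 1: every u in this class satisfies u(v) ≥ m(v) and u^R(v) ≥ m^R(v) for all v. -/

import Mathlib

/-- An activated random walk instruction. -/
inductive ArwInstr
  | left
  | right
  | sleep
deriving DecidableEq

/-- Signed number of `right` instructions among the first `m` instructions at site `v`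
of a two-sided instruction stack (negative indices are executed with reversed effect). -/
noncomputable def ecntR (I : ℤ → ℤ → ArwInstr) (v : ℤ) (m : ℤ) : ℤ :=
  if 0 ≤ m then (((Finset.Ioc 0 m).filter (fun k => I v k = ArwInstr.right)).card : ℤ)
  else -((((Finset.Ioc m 0).filter (fun k => I v k = ArwInstr.right)).card : ℤ))

/-- Signed number of `left` instructions among the first `m` instructions at site `v`. -/
noncomputable def ecntL (I : ℤ → ℤ → ArwInstr) (v : ℤ) (m : ℤ) : ℤ :=
  if 0 ≤ m then (((Finset.Ioc 0 m).filter (fun k => I v k = ArwInstr.left)).card : ℤ)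
  else -((((Finset.Ioc m 0).filter (fun k => I v k = ArwInstr.left)).card : ℤ))

/-- `u^R(v)` for an extended odometer `u : ℤ → ℤ`. -/
noncomputable def eR (I : ℤ → ℤ → ArwInstr) (u : ℤ → ℤ) (v : ℤ) : ℤ := ecntR I v (u v)

/-- `u^L(v)` for an extended odometer `u : ℤ → ℤ`. -/
noncomputable def eL (I : ℤ → ℤ → ArwInstr) (u : ℤ → ℤ) (v : ℤ) : ℤ := ecntL I v (u v)

/-- The local balance `h(v) = σ(v) + u^R(v-1) + u^L(v+1) - u^L(v) - u^R(v)`. -/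
noncomputable def ebal (I : ℤ → ℤ → ArwInstr) (σ : ℤ → ℕ) (u : ℤ → ℤ) (v : ℤ) : ℤ :=
  (σ v : ℤ) + eR I u (v - 1) + eL I u (v + 1) - eL I u v - eR I u v

/-- An extended odometer `u` is stable at `v` if `h(v) ∈ {0,1}` and `h(v) = 1` iff the
last executed instruction at `v` is `sleep`. -/
def EStableAt (I : ℤ → ℤ → ArwInstr) (σ : ℤ → ℕ) (u : ℤ → ℤ) (v : ℤ) : Prop :=
  ebal I σ u v ∈ ({0, 1} : Set ℤ) ∧ (ebal I σ u v = 1 ↔ I v (u v) = ArwInstr.sleep)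

/-! The count `k ↦ ecntL I v k` is nondecreasing with unit steps and, because every site carries
infinitely many `left` instructions in both directions, unbounded both ways; so the least `k` with
`t ≤ ecntL I v k` exists and attains `t` exactly, and the procedure is well defined.

Stability gives `h ≥ 0` on `{1, …, n}`. Summing the balances, starting from the flow condition at
`0`, shows that an admissible `u` executes at least the demanded number of `left` instructions at
`v` given `u (v - 1)`. The demand is monotone in the value at `v - 1`, so induction on `v` yields
`m v ≤ u v`, and `m^R(v) ≤ u^R(v)` follows by monotonicity of the right count. -/

section UnitStep

variable {f : ℤ → ℤ}

theorem exists_le_apply_of_forall_exists_lt (hf : ∀ N, ∃ k, f N < f k) (t : ℤ) :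
    ∃ k, t ≤ f k := by
  have key : ∀ j : ℕ, ∃ k, f 0 + j ≤ f k := by
    intro j
    induction j with
    | zero => exact ⟨0, by simp⟩
    | succ j ih =>
      obtain ⟨k, hk⟩ := ih
      obtain ⟨k', hk'⟩ := hf k
      exact ⟨k', by push_cast; omega⟩
  obtain ⟨k, hk⟩ := key (t - f 0).toNat
  exact ⟨k, by omega⟩

theorem exists_apply_lt_of_forall_exists_lt (hf : ∀ N, ∃ k, f k < f N) (t : ℤ) :
    ∃ k, f k < t := by
  have hneg : ∀ N, ∃ k, -f (-N) < -f (-k) := fun N => by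
    obtain ⟨k, hk⟩ := hf (-N)
    exact ⟨-k, by simpa using hk⟩
  obtain ⟨k, hk⟩ := exists_le_apply_of_forall_exists_lt hneg (1 - t)
  exact ⟨-k, by omega⟩

theorem bddBelow_setOf_le_apply (hf : Monotone f) {t : ℤ} (hlo : ∃ k, f k < t) :
    BddBelow {k | t ≤ f k} := by
  obtain ⟨k₀, hk₀⟩ := hlo
  refine ⟨k₀, fun k (hk : t ≤ f k) => ?_⟩
  by_contra! hlt
  have := hf hlt.le
  omega

theorem apply_csInf_setOf_le_apply (hf : Monotone f) (hstep : ∀ k, f (k + 1) ≤ f k + 1)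
    {t : ℤ} (hlo : ∃ k, f k < t) (hhi : ∃ k, t ≤ f k) :
    f (sInf {k | t ≤ f k}) = t := by
  set k₀ := sInf {k | t ≤ f k}
  have hbdd := bddBelow_setOf_le_apply hf hlo
  have hmem : t ≤ f k₀ := Int.csInf_mem hhi hbdd
  have hprev : f (k₀ - 1) < t := by
    by_contra! h
    have := csInf_le hbdd (show k₀ - 1 ∈ {k | t ≤ f k} from h)
    omega
  have := hstep (k₀ - 1)
  rw [sub_add_cancel] at this
  omega

end UnitStep

section SignedCount

variable (p : ℤ → Prop) [DecidablePred p]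

noncomputable def signedCount (m : ℤ) : ℤ :=
  if 0 ≤ m then (((Finset.Ioc 0 m).filter p).card : ℤ)
  else -((((Finset.Ioc m 0).filter p).card : ℤ))

theorem ecntL_eq_signedCount (I : ℤ → ℤ → ArwInstr) (v : ℤ) :
    ecntL I v = signedCount (fun k => I v k = ArwInstr.left) := rfl

theorem signedCount_add_one (m : ℤ) :
    signedCount p (m + 1) = signedCount p m + if p (m + 1) then 1 else 0 := by
  have hnot : ∀ a b : ℤ, m + 1 ∉ Finset.Ioc a b → m + 1 ∉ (Finset.Ioc a b).filter p :=
    fun a b h hm => h (Finset.mem_of_mem_filter _ hm)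
  rcases lt_trichotomy m (-1) with hm | rfl | hm
  · have hIoc : Finset.Ioc m 0 = insert (m + 1) (Finset.Ioc (m + 1) 0) := by
      ext z; simp only [Finset.mem_Ioc, Finset.mem_insert]; omega
    rw [signedCount, signedCount, if_neg (by omega), if_neg (by omega), hIoc,
      Finset.filter_insert]
    split_ifs
    · rw [Finset.card_insert_of_notMem (hnot _ _ (by simp))]; push_cast; ring
    · ring
  · have hIoc : Finset.Ioc (-1 : ℤ) 0 = {0} := by
      ext z; simp only [Finset.mem_Ioc, Finset.mem_singleton]; omega
    simp only [signedCount, hIoc, Finset.filter_singleton]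
    split_ifs <;> simp_all
  · have hIoc : Finset.Ioc 0 (m + 1) = insert (m + 1) (Finset.Ioc 0 m) := by
      ext z; simp only [Finset.mem_Ioc, Finset.mem_insert]; omega
    rw [signedCount, signedCount, if_pos (by omega), if_pos (by omega), hIoc,
      Finset.filter_insert]
    split_ifs
    · rw [Finset.card_insert_of_notMem (hnot _ _ (by simp))]; push_cast; ring
    · ring

variable {p}

theorem signedCount_add_one_le (m : ℤ) : signedCount p (m + 1) ≤ signedCount p m + 1 := by
  rw [signedCount_add_one]; split_ifs <;> omega

theorem signedCount_monotone : Monotone (signedCount p) :=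
  monotone_int_of_le_succ fun m => by rw [signedCount_add_one]; split_ifs <;> omega

theorem signedCount_lt_of_lt {N k : ℤ} (hNk : N < k) (hk : p k) :
    signedCount p N < signedCount p k := by
  have := signedCount_add_one p (k - 1)
  rw [sub_add_cancel, if_pos hk] at this
  have := signedCount_monotone (p := p) (show N ≤ k - 1 by omega)
  omega

theorem signedCount_unbounded (hp : ∀ N, (∃ k, N < k ∧ p k) ∧ ∃ k, k < N ∧ p k) (t : ℤ) :
    (∃ k, signedCount p k < t) ∧ ∃ k, t ≤ signedCount p k := by
  refine ⟨exists_apply_lt_of_forall_exists_lt (fun N => ?_) t,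
    exists_le_apply_of_forall_exists_lt (fun N => ?_) t⟩
  · obtain ⟨k, hkN, hk⟩ := (hp N).2
    exact ⟨k - 1, (signedCount_lt_of_lt (sub_one_lt k) hk).trans_le
      (signedCount_monotone hkN.le)⟩
  · obtain ⟨k, hNk, hk⟩ := (hp N).1
    exact ⟨k, signedCount_lt_of_lt hNk hk⟩

end SignedCount

section Odometer

variable {I : ℤ → ℤ → ArwInstr} {σ : ℤ → ℕ} {u₀ f₀ : ℤ}

/-- The number of `left` instructions that must be executed at `v` when the odometer at `v - 1`
equals `x`. -/
noncomputable def leftDemand (I : ℤ → ℤ → ArwInstr) (σ : ℤ → ℕ) (f₀ v x : ℤ) : ℤ :=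
  ecntR I (v - 1) x - f₀ - ∑ i ∈ Finset.Ico 1 v, (σ i : ℤ)

noncomputable def minOdometerNat (I : ℤ → ℤ → ArwInstr) (σ : ℤ → ℕ) (u₀ f₀ : ℤ) : ℕ → ℤ
  | 0 => u₀
  | j + 1 => sInf {k | leftDemand I σ f₀ (j + 1) (minOdometerNat I σ u₀ f₀ j) ≤ ecntL I (j + 1) k}

/-- Through `Int.toNat`, negative sites get the value `u₀`; they play no role. -/
noncomputable def minOdometer (I : ℤ → ℤ → ArwInstr) (σ : ℤ → ℕ) (u₀ f₀ v : ℤ) : ℤ :=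
  minOdometerNat I σ u₀ f₀ v.toNat

theorem ecntR_monotone (I : ℤ → ℤ → ArwInstr) (v : ℤ) : Monotone (ecntR I v) :=
  signedCount_monotone

theorem minOdometer_zero : minOdometer I σ u₀ f₀ 0 = u₀ := rfl

theorem minOdometer_eq_sInf {v : ℤ} (hv : 1 ≤ v) :
    minOdometer I σ u₀ f₀ v =
      sInf {k | leftDemand I σ f₀ v (minOdometer I σ u₀ f₀ (v - 1)) ≤ ecntL I v k} := by
  obtain ⟨j, rfl⟩ : ∃ j : ℕ, v = j + 1 := ⟨(v - 1).toNat, by omega⟩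
  simp only [minOdometer, add_sub_cancel_right, Int.toNat_natCast]
  rw [show ((j : ℤ) + 1).toNat = j + 1 by omega]
  rfl

theorem minOdometer_spec
    (hrich : ∀ v N : ℤ, (∃ k, N < k ∧ I v k = ArwInstr.left) ∧ ∃ k, k < N ∧ I v k = ArwInstr.left)
    {v : ℤ} (hv : 1 ≤ v) :
    ecntL I v (minOdometer I σ u₀ f₀ v) = leftDemand I σ f₀ v (minOdometer I σ u₀ f₀ (v - 1)) ∧
      ∀ k, leftDemand I σ f₀ v (minOdometer I σ u₀ f₀ (v - 1)) ≤ ecntL I v k →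
        minOdometer I σ u₀ f₀ v ≤ k := by
  obtain ⟨hlo, hhi⟩ := signedCount_unbounded (hrich v)
    (leftDemand I σ f₀ v (minOdometer I σ u₀ f₀ (v - 1)))
  rw [minOdometer_eq_sInf hv, ecntL_eq_signedCount]
  exact ⟨apply_csInf_setOf_le_apply signedCount_monotone signedCount_add_one_le hlo hhi,
    fun k hk => csInf_le (bddBelow_setOf_le_apply signedCount_monotone hlo) hk⟩

theorem EStableAt.ebal_nonneg {u : ℤ → ℤ} {v : ℤ} (h : EStableAt I σ u v) :
    0 ≤ ebal I σ u v := by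
  rcases h.1 with h0 | h1 <;> simp_all

/-- Summing `h ≥ 0` over `1, …, v - 1` bounds the flow from `v - 1` to `v`. -/
theorem leftDemand_le_eL {u : ℤ → ℤ} (hflow : eR I u 0 - eL I u 1 = f₀) {v : ℤ} (hv : 1 ≤ v)
    (hbal : ∀ w ∈ Set.Ico 1 v, 0 ≤ ebal I σ u w) :
    leftDemand I σ f₀ v (u (v - 1)) ≤ eL I u v := by
  induction v, hv using Int.leInduction with
  | base => simp [leftDemand, eR, eL, ← hflow]
  | succ v hv ih =>
    have hprev := ih fun w hw => hbal w ⟨hw.1, hw.2.trans (lt_add_one v)⟩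
    have hv' := hbal v ⟨hv, lt_add_one v⟩
    simp only [leftDemand, ebal, eR, eL, add_sub_cancel_right,
      ← Finset.sum_Ico_add_eq_sum_Ico_add_one hv] at *
    linarith

theorem minOdometer_le {u : ℤ → ℤ} (hrich : ∀ v N : ℤ,
      (∃ k, N < k ∧ I v k = ArwInstr.left) ∧ ∃ k, k < N ∧ I v k = ArwInstr.left)
    (hu₀ : u 0 = u₀) (hflow : eR I u 0 - eL I u 1 = f₀) {v : ℤ} (hv : 0 ≤ v)
    (hbal : ∀ w ∈ Set.Ico 1 v, 0 ≤ ebal I σ u w) :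
    minOdometer I σ u₀ f₀ v ≤ u v := by
  induction v, hv using Int.leInduction with
  | base => exact hu₀.ge
  | succ v hv ih =>
    have hprev := ih fun w hw => hbal w ⟨hw.1, hw.2.trans (lt_add_one v)⟩
    refine (minOdometer_spec hrich (by omega)).2 _ (le_trans ?_ (leftDemand_le_eL hflow
      (by omega) hbal))
    simp only [leftDemand, add_sub_cancel_right]
    linarith [ecntR_monotone I v hprev]

end Odometer

/-- minimal odometer well-definedness: given two-sided instruction stacks
(with infinitely many `left` instructions in each direction at every site), a
configuration `σ`, and parameters `u₀, f₀`, the inductive procedure `m(0) = u₀`,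
`m(v) = min { k : m^L(v) evaluated at k equals m^R(v-1) - f₀ - Σ_{i=1}^{v-1} |σ(i)| }`
defines an extended odometer `m` that is pointwise minimal among all extended stable
odometers on `{0,…,n}` with value `u₀` at `0` and net flow `f₀` from `0` to `1`:
every such `u` satisfies `u(v) ≥ m(v)` and `u^R(v) ≥ m^R(v)` for all `v`. -/
theorem minimal_odometer (I : ℤ → ℤ → ArwInstr) (σ : ℤ → ℕ) (n : ℕ) (u₀ f₀ : ℤ)
    (hrich : ∀ v : ℤ, ∀ N : ℤ,
      (∃ k : ℤ, N < k ∧ I v k = ArwInstr.left) ∧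
      (∃ k : ℤ, k < N ∧ I v k = ArwInstr.left)) :
    ∃ m : ℤ → ℤ,
      m 0 = u₀ ∧
      (∀ v ∈ Finset.Icc (1 : ℤ) (n : ℤ),
        ecntL I v (m v) =
          ecntR I (v - 1) (m (v - 1)) - f₀ - ∑ i ∈ Finset.Ico (1 : ℤ) v, (σ i : ℤ) ∧
        ∀ k : ℤ, ecntL I v k =
            ecntR I (v - 1) (m (v - 1)) - f₀ - ∑ i ∈ Finset.Ico (1 : ℤ) v, (σ i : ℤ) →
          m v ≤ k) ∧
      (∀ u : ℤ → ℤ, u 0 = u₀ → eR I u 0 - eL I u 1 = f₀ →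
        (∀ v ∈ Set.Icc (1 : ℤ) (n : ℤ), EStableAt I σ u v) →
        ∀ v ∈ Set.Icc (0 : ℤ) (n : ℤ), m v ≤ u v ∧ ecntR I v (m v) ≤ ecntR I v (u v)) := by
  refine ⟨minOdometer I σ u₀ f₀, minOdometer_zero, fun v hv => ?_, ?_⟩
  · obtain ⟨hattained, hleast⟩ := minOdometer_spec (σ := σ) (u₀ := u₀) (f₀ := f₀) hrich
      (Finset.mem_Icc.1 hv).1
    exact ⟨hattained, fun k hk => hleast k hk.ge⟩
  · intro u hu₀ hflow hstable v ⟨hv₀, hvn⟩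
    have hle := minOdometer_le hrich hu₀ hflow hv₀
      fun w hw => (hstable w ⟨hw.1, by linarith [hw.2]⟩).ebal_nonneg
    exact ⟨hle, ecntR_monotone I v hle⟩
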